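/- The number A = (1/2) · α_0 α_1 ⋯ α_{n−1} · tr(T_{n−1}(λ) ⋯ T_1(λ) T_0(λ)) is a real number. -/
import Mathlib


open scoped Real

/-- The transfer matrix `T(λ) = (1/α)[[e^{i(λ−Δ)}, −β], [−conj β, e^{−i(λ−Δ)}]]`. -/
noncomputable def transferM (a b : ℂ) (d l : ℝ) : Matrix (Fin 2) (Fin 2) ℂ :=
  a⁻¹ • !![Complex.exp (Complex.I * (l - d)), -b;
           -(starRingEnd ℂ b), Complex.exp (-(Complex.I * (l - d)))]

/-- Ordered product `∏_{i=0}^{n-1} T_i = T_{n-1} ⋯ T_1 T_0`. -/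
noncomputable def prodRev (T : ℕ → Matrix (Fin 2) (Fin 2) ℂ) : ℕ → Matrix (Fin 2) (Fin 2) ℂ
  | 0 => 1
  | n + 1 => T n * prodRev T n

def IsConjSym (M : Matrix (Fin 2) (Fin 2) ℂ) : Prop :=
  M 1 1 = starRingEnd ℂ (M 0 0) ∧ M 1 0 = starRingEnd ℂ (M 0 1)

lemma isConjSym_one : IsConjSym 1 := by
  constructor <;> simp [Matrix.one_apply]

lemma isConjSym_mul {A B : Matrix (Fin 2) (Fin 2) ℂ}
    (hA : IsConjSym A) (hB : IsConjSym B) : IsConjSym (A * B) := by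
  obtain ⟨ha1, ha2⟩ := hA
  obtain ⟨hb1, hb2⟩ := hB
  constructor <;>
    simp [Matrix.mul_apply, Fin.sum_univ_two, ha1, ha2, hb1, hb2, map_add, map_mul] <;>
    ring

lemma isConjSym_prodRev (T : ℕ → Matrix (Fin 2) (Fin 2) ℂ) (n : ℕ)
    (h : ∀ k < n, IsConjSym (T k)) : IsConjSym (prodRev T n) := by
  induction n with
  | zero => exact isConjSym_one
  | succ m ih =>
      exact isConjSym_mul (h m (Nat.lt_succ_self m))
        (ih fun k hk => h k (hk.trans (Nat.lt_succ_self m)))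

lemma prodRev_smul (c : ℕ → ℂ) (T : ℕ → Matrix (Fin 2) (Fin 2) ℂ) (n : ℕ) :
    prodRev (fun k => c k • T k) n = (∏ i ∈ Finset.range n, c i) • prodRev T n := by
  induction n with
  | zero => simp [prodRev]
  | succ m ih =>
      simp only [prodRev, ih, Finset.prod_range_succ, smul_mul_assoc, mul_smul_comm,
        smul_smul]

lemma isConjSym_scaled (a b : ℂ) (d l : ℝ) (ha : a ≠ 0) :
    IsConjSym (a • transferM a b d l) := by
  have : a • transferM a b d l =
      !![Complex.exp (Complex.I * (l - d)), -b;
         -(starRingEnd ℂ b), Complex.exp (-(Complex.I * (l - d)))] := by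
    rw [transferM, smul_smul, mul_inv_cancel₀ ha, one_smul]
  rw [this]
  constructor
  · simp [← Complex.exp_conj, map_mul, Complex.conj_I]
  · simp

/-- `A = (1/2) · α_0 α_1 ⋯ α_{n−1} · tr(T_{n−1}(λ) ⋯ T_1(λ) T_0(λ))` is a real number. -/
theorem A_is_real
    (n : ℕ) (hn : 0 < n) (l : ℝ) (hl : 0 ≤ l ∧ l < 2 * π)
    (α β : ℕ → ℂ) (Δ : ℕ → ℝ)
    (hΔ : ∀ k < n, 0 ≤ Δ k ∧ Δ k < 2 * π)
    (hα : ∀ k < n, α k ≠ 0)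
    (hαβ : ∀ k < n, ‖α k‖ ^ 2 + ‖β k‖ ^ 2 = 1) :
    ∃ r : ℝ,
      (1 / 2 : ℂ) * (∏ i ∈ Finset.range n, α i) *
        (prodRev (fun k => transferM (α k) (β k) (Δ k) l) n).trace = (r : ℂ) := by
  set T := fun k => transferM (α k) (β k) (Δ k) l with hT
  set M := prodRev (fun k => α k • T k) n with hM
  have hP : IsConjSym M :=
    isConjSym_prodRev _ n fun k hk => isConjSym_scaled _ _ _ _ (hα k hk)
  have hprod : M = (∏ i ∈ Finset.range n, α i) • prodRev T n := prodRev_smul α T n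
  have htr : (∏ i ∈ Finset.range n, α i) * (prodRev T n).trace = M.trace := by
    rw [hprod, Matrix.trace_smul, smul_eq_mul]
  have htr2 : M.trace = ((2 * (M 0 0).re : ℝ) : ℂ) := by
    rw [Matrix.trace, Fin.sum_univ_two, Matrix.diag_apply, Matrix.diag_apply, hP.1,
      Complex.add_conj]
  refine ⟨(M 0 0).re, ?_⟩
  rw [mul_assoc, htr, htr2]
  push_cast
  ring
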